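/- arXiv:2503.00451 — 3 statements merged into one kernel-verified Lean document; each statement's English description precedes it below -/
import Mathlib

section
/- Let p > 0 and n ≥ 1. Let f be a probability density on R^n with finite p-th moment and finite entropy ∫ f log f. Then ∫ |x|^p f(x) dx ≥ (D_{n,p,1}/(n ω_n)^{p/n}) exp(-(p/n) ∫ f log f), with equality if and only if f(x) = a e^{-|bx|^p} a.e. for some a, b > 0. -/
/-!
For `t > 0` let `g_t` be the probability density proportional to `exp (-t ‖x‖ ^ p)`; integration
in polar coordinates gives its normalising constant `Z t = ω_n Γ(n/p + 1) t ^ (-n/p)` and its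
`p`-th moment `n / (p t)`. Gibbs' inequality `∫ f log g_t ≤ ∫ f log f` reads
`-t M - log (Z t) ≤ ∫ f log f`, where `M` is the `p`-th moment of `f`. For the `t` at which the
moments of `f` and `g_t` agree, exponentiating this is exactly the Carlson–Levin bound, and
equality holds iff `f = g_t` a.e.; the densities `a exp (-(b ‖x‖) ^ p)` are precisely the `g_t`.
-/

open MeasureTheory

/-- `D_{n,p,1} = (n/(p e)) ((1/n) Γ(1+n/p))^(-p/n)`. -/
noncomputable def Dnp1 (n : ℕ) (p : ℝ) : ℝ :=
  ((n : ℝ) / (p * Real.exp 1)) *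
    ((1 / (n : ℝ)) * Real.Gamma (1 + n / p)) ^ (-(p / (n : ℝ)))

open Real Set Metric Module InformationTheory

lemma Dnp1_div_mul_exp_eq {d : ℕ} (hd : 0 < d) {p ω t M H : ℝ} (hp : 0 < p) (hω : 0 < ω)
    (ht : 0 < t) (htM : t * M = d / p) :
    Dnp1 d p / (d * ω) ^ (p / d) * exp (-(p / d) * H) =
      M * exp (-(p / d) * (H + t * M + log (ω * Gamma (d / p + 1) * t ^ (-(d / p))))) := by
  have hd' : (0 : ℝ) < d := Nat.cast_pos.mpr hd
  have hG : 0 < Gamma (d / p + 1) := Gamma_pos_of_pos (by positivity)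
  have hD : Dnp1 d p / (d * ω) ^ (p / d) =
      d / (p * exp 1) * (ω * Gamma (d / p + 1)) ^ (-(p / d)) := by
    rw [Dnp1, add_comm 1, div_eq_mul_inv, ← rpow_neg (by positivity), mul_assoc,
      ← mul_rpow (by positivity) (by positivity)]
    rw [show 1 / (d : ℝ) * Gamma (d / p + 1) * (d * ω) = ω * Gamma (d / p + 1) by field_simp]
  have hZ : (ω * Gamma (d / p + 1) * t ^ (-(d / p))) ^ (-(p / d)) =
      (ω * Gamma (d / p + 1)) ^ (-(p / d)) * t := by
    rw [mul_rpow (by positivity) (by positivity), ← rpow_mul ht.le,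
      show -(d / p) * -(p / d) = (1 : ℝ) by field_simp, rpow_one]
  have hexp : -(p / d) * (H + t * M + log (ω * Gamma (d / p + 1) * t ^ (-(d / p)))) =
      -(p / d) * H + -1 + log (ω * Gamma (d / p + 1) * t ^ (-(d / p))) * -(p / d) := by
    rw [htM]
    field_simp
    ring
  rw [hD, hexp, exp_add, exp_add, ← rpow_def_of_pos (by positivity), hZ, exp_neg]
  linear_combination
    (-(exp (-(p / d) * H) * (exp 1)⁻¹ * (ω * Gamma (d / p + 1)) ^ (-(p / d)))) * htM

section Gibbs

variable {α : Type*} [MeasurableSpace α] {μ : Measure α} {f g : α → ℝ}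

lemma mul_klFun_div_eq {u s : ℝ} (hs : s ≠ 0) :
    s * klFun (u / s) = u * log u - u * log s + s - u := by
  rcases eq_or_ne u 0 with rfl | hu
  · simp [klFun]
  · rw [klFun, log_div hu hs]
    field_simp

lemma integral_mul_klFun_div (hg : ∀ x, g x ≠ 0) (hfi : Integrable f μ) (hgi : Integrable g μ)
    (hflogf : Integrable (fun x ↦ f x * log (f x)) μ)
    (hflogg : Integrable (fun x ↦ f x * log (g x)) μ) :
    Integrable (fun x ↦ g x * klFun (f x / g x)) μ ∧
      ∫ x, g x * klFun (f x / g x) ∂μ =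
        ∫ x, f x * log (f x) ∂μ - ∫ x, f x * log (g x) ∂μ + ∫ x, g x ∂μ - ∫ x, f x ∂μ := by
  simp_rw [mul_klFun_div_eq (hg _)]
  exact ⟨((hflogf.sub hflogg).add hgi).sub hfi, by
    rw [integral_sub _ hfi, integral_add _ hgi, integral_sub hflogf hflogg]
    exacts [hflogf.sub hflogg, (hflogf.sub hflogg).add hgi]⟩

theorem integral_mul_log_le_integral_mul_log (hf : ∀ x, 0 ≤ f x) (hg : ∀ x, 0 < g x)
    (hfi : Integrable f μ) (hgi : Integrable g μ) (hfg : ∫ x, f x ∂μ = ∫ x, g x ∂μ)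
    (hflogf : Integrable (fun x ↦ f x * log (f x)) μ)
    (hflogg : Integrable (fun x ↦ f x * log (g x)) μ) :
    ∫ x, f x * log (g x) ∂μ ≤ ∫ x, f x * log (f x) ∂μ ∧
      (∫ x, f x * log (g x) ∂μ = ∫ x, f x * log (f x) ∂μ ↔ f =ᵐ[μ] g) := by
  obtain ⟨hint, heq⟩ := integral_mul_klFun_div (fun x ↦ (hg x).ne') hfi hgi hflogf hflogg
  rw [hfg, add_sub_cancel_right] at heq
  have hnonneg : 0 ≤ fun x ↦ g x * klFun (f x / g x) := fun x ↦
    mul_nonneg (hg x).le (klFun_nonneg (div_nonneg (hf x) (hg x).le))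
  refine ⟨sub_nonneg.mp (heq ▸ integral_nonneg hnonneg), ?_⟩
  rw [eq_comm, ← sub_eq_zero, ← heq, integral_eq_zero_iff_of_nonneg hnonneg hint]
  refine Filter.eventually_congr (.of_forall fun x ↦ ?_)
  rw [Pi.zero_apply, mul_eq_zero_iff_left (hg x).ne',
    klFun_eq_zero_iff (div_nonneg (hf x) (hg x).le), div_eq_one_iff_eq (hg x).ne']

end Gibbs

lemma measureReal_unitBall_pos {E : Type*} [NormedAddCommGroup E] [NormedSpace ℝ E]
    [FiniteDimensional ℝ E] [MeasurableSpace E] [BorelSpace E] (μ : Measure E)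
    [μ.IsAddHaarMeasure] : 0 < μ.real (ball (0 : E) 1) :=
  ENNReal.toReal_pos (measure_ball_pos μ 0 one_pos).ne' measure_ball_lt_top.ne

noncomputable def expNormRpowDensity {E : Type*} [NormedAddCommGroup E] [MeasurableSpace E]
    (μ : Measure E) (p t : ℝ) (x : E) : ℝ :=
  exp (-(t * ‖x‖ ^ p)) / ∫ y, exp (-(t * ‖y‖ ^ p)) ∂μ

section Radial

variable {E : Type*} [NormedAddCommGroup E] [NormedSpace ℝ E] [FiniteDimensional ℝ E]
  [MeasurableSpace E] [BorelSpace E] [Nontrivial E] (μ : Measure E) [μ.IsAddHaarMeasure]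
  {p t : ℝ}

lemma integrable_exp_neg_mul_norm_rpow (hp : 0 < p) (ht : 0 < t) :
    Integrable (fun x : E ↦ exp (-(t * ‖x‖ ^ p))) μ := by
  have hd : (1 : ℝ) ≤ finrank ℝ E := Nat.one_le_cast.mpr finrank_pos
  rw [integrable_fun_norm_addHaar μ (f := fun y ↦ exp (-(t * y ^ p)))]
  refine (integrableOn_rpow_mul_exp_neg_mul_rpow (s := (finrank ℝ E : ℝ) - 1) (by linarith)
    hp ht).congr_fun (fun y _ ↦ ?_) measurableSet_Ioi
  dsimp only
  rw [smul_eq_mul, ← rpow_natCast, Nat.cast_sub finrank_pos, Nat.cast_one, neg_mul]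

lemma integral_norm_rpow_mul_exp_neg_mul_norm_rpow (hp : 0 < p) (ht : 0 < t) {q : ℝ}
    (hq : -(finrank ℝ E : ℝ) < q) :
    ∫ x : E, ‖x‖ ^ q * exp (-(t * ‖x‖ ^ p)) ∂μ =
      finrank ℝ E * μ.real (ball 0 1) *
        (t ^ (-(finrank ℝ E + q) / p) * (1 / p) * Gamma ((finrank ℝ E + q) / p)) := by
  rw [integral_fun_norm_addHaar μ (fun y ↦ y ^ q * exp (-(t * y ^ p))), nsmul_eq_mul,
    smul_eq_mul, mul_assoc]
  congr 2
  have hd : 0 < finrank ℝ E := finrank_pos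
  rw [setIntegral_congr_fun measurableSet_Ioi
    (g := fun y ↦ y ^ ((finrank ℝ E : ℝ) - 1 + q) * exp (-t * y ^ p)) fun y (hy : 0 < y) ↦ by
      dsimp only
      rw [smul_eq_mul, ← mul_assoc, ← rpow_natCast, ← rpow_add hy, Nat.cast_sub hd, Nat.cast_one,
        neg_mul],
    integral_rpow_mul_exp_neg_mul_rpow hp (by linarith) ht,
    show (finrank ℝ E : ℝ) - 1 + q + 1 = finrank ℝ E + q by ring]

lemma integral_exp_neg_mul_norm_rpow (hp : 0 < p) (ht : 0 < t) :
    ∫ x : E, exp (-(t * ‖x‖ ^ p)) ∂μ =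
      μ.real (ball 0 1) * Gamma (finrank ℝ E / p + 1) * t ^ (-(finrank ℝ E / p)) := by
  have hd : (0 : ℝ) < finrank ℝ E := Nat.cast_pos.mpr finrank_pos
  have h := integral_norm_rpow_mul_exp_neg_mul_norm_rpow μ hp ht (neg_lt_zero.mpr hd)
  simp only [rpow_zero, one_mul, add_zero] at h
  rw [h, Gamma_add_one (by positivity), neg_div]
  field_simp

lemma integral_exp_neg_mul_norm_rpow_pos (hp : 0 < p) (ht : 0 < t) :
    0 < ∫ x : E, exp (-(t * ‖x‖ ^ p)) ∂μ := by
  rw [integral_exp_neg_mul_norm_rpow μ hp ht]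
  have := measureReal_unitBall_pos μ
  have : 0 < Gamma (finrank ℝ E / p + 1) := Gamma_pos_of_pos (by positivity)
  positivity

lemma expNormRpowDensity_pos (hp : 0 < p) (ht : 0 < t) (x : E) :
    0 < expNormRpowDensity μ p t x :=
  div_pos (exp_pos _) (integral_exp_neg_mul_norm_rpow_pos μ hp ht)

lemma integrable_expNormRpowDensity (hp : 0 < p) (ht : 0 < t) :
    Integrable (expNormRpowDensity μ p t) μ :=
  (integrable_exp_neg_mul_norm_rpow μ hp ht).div_const _

lemma integral_expNormRpowDensity (hp : 0 < p) (ht : 0 < t) :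
    ∫ x, expNormRpowDensity μ p t x ∂μ = 1 := by
  simp_rw [expNormRpowDensity]
  rw [integral_div, div_self (integral_exp_neg_mul_norm_rpow_pos μ hp ht).ne']

lemma integral_norm_rpow_mul_expNormRpowDensity (hp : 0 < p) (ht : 0 < t) :
    ∫ x, ‖x‖ ^ p * expNormRpowDensity μ p t x ∂μ = finrank ℝ E / (p * t) := by
  have hd : (0 : ℝ) < finrank ℝ E := Nat.cast_pos.mpr finrank_pos
  simp_rw [expNormRpowDensity, mul_div_assoc']
  rw [integral_div, integral_norm_rpow_mul_exp_neg_mul_norm_rpow μ hp ht (by linarith),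
    integral_exp_neg_mul_norm_rpow μ hp ht, add_div, div_self hp.ne', neg_add', sub_div,
    div_self hp.ne', rpow_sub ht, rpow_one, Gamma_add_one (by positivity), neg_div]
  have := measureReal_unitBall_pos μ
  field_simp

lemma mul_log_expNormRpowDensity (hp : 0 < p) (ht : 0 < t) (f : E → ℝ) (x : E) :
    f x * log (expNormRpowDensity μ p t x) =
      -t * (‖x‖ ^ p * f x) - log (∫ x : E, exp (-(t * ‖x‖ ^ p)) ∂μ) * f x := by
  rw [expNormRpowDensity, log_div (exp_ne_zero _)
    (integral_exp_neg_mul_norm_rpow_pos μ hp ht).ne', log_exp]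
  ring

lemma integrable_mul_log_expNormRpowDensity (hp : 0 < p) (ht : 0 < t) {f : E → ℝ}
    (hf_int : Integrable f μ) (hmom : Integrable (fun x ↦ ‖x‖ ^ p * f x) μ) :
    Integrable (fun x ↦ f x * log (expNormRpowDensity μ p t x)) μ := by
  simp_rw [mul_log_expNormRpowDensity μ hp ht]
  exact (hmom.const_mul _).sub (hf_int.const_mul _)

lemma integral_mul_log_expNormRpowDensity (hp : 0 < p) (ht : 0 < t) {f : E → ℝ}
    (hf_int : Integrable f μ) (hf_one : ∫ x, f x ∂μ = 1)
    (hmom : Integrable (fun x ↦ ‖x‖ ^ p * f x) μ) :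
    ∫ x, f x * log (expNormRpowDensity μ p t x) ∂μ =
      -(t * ∫ x, ‖x‖ ^ p * f x ∂μ) - log (∫ x : E, exp (-(t * ‖x‖ ^ p)) ∂μ) := by
  simp_rw [mul_log_expNormRpowDensity μ hp ht]
  rw [integral_sub (hmom.const_mul _) (hf_int.const_mul _), integral_const_mul,
    integral_const_mul, hf_one, mul_one, neg_mul]

lemma eq_div_of_ae_eq_expNormRpowDensity (hp : 0 < p) (ht : 0 < t) {f : E → ℝ}
    (hf : f =ᵐ[μ] expNormRpowDensity μ p t) :
    t = finrank ℝ E / (p * ∫ x, ‖x‖ ^ p * f x ∂μ) := by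
  have hd : (0 : ℝ) < finrank ℝ E := Nat.cast_pos.mpr finrank_pos
  rw [integral_congr_ae (g := fun x ↦ ‖x‖ ^ p * expNormRpowDensity μ p t x)
      (hf.mono fun x hx ↦ by simp only [hx]),
    integral_norm_rpow_mul_expNormRpowDensity μ hp ht]
  field_simp

lemma integral_norm_rpow_mul_pos (hp : 0 < p) {f : E → ℝ} (hf_nonneg : ∀ x, 0 ≤ f x)
    (hf_one : ∫ x, f x ∂μ = 1) (hmom : Integrable (fun x ↦ ‖x‖ ^ p * f x) μ) :
    0 < ∫ x, ‖x‖ ^ p * f x ∂μ := by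
  have hnonneg : 0 ≤ fun x ↦ ‖x‖ ^ p * f x := fun x ↦ mul_nonneg (by positivity) (hf_nonneg x)
  refine (integral_nonneg hnonneg).lt_of_ne fun h ↦ ?_
  have hf : f =ᵐ[μ] 0 := by
    filter_upwards [(integral_eq_zero_iff_of_nonneg hnonneg hmom).mp h.symm,
      measure_singleton (μ := μ) 0 |> compl_mem_ae_iff.mpr] with x hx hx0
    exact (mul_eq_zero.mp hx).resolve_left (by simpa [hp.ne'] using hx0)
  simp [integral_congr_ae hf] at hf_one

lemma exists_ae_eq_mul_exp_iff (hp : 0 < p) {f : E → ℝ} (hf_one : ∫ x, f x ∂μ = 1) :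
    (∃ a b : ℝ, 0 < a ∧ 0 < b ∧ f =ᵐ[μ] fun x ↦ a * exp (-(b * ‖x‖) ^ p)) ↔
      ∃ t, 0 < t ∧ f =ᵐ[μ] expNormRpowDensity μ p t := by
  have hscale {b : ℝ} (hb : 0 < b) (x : E) : (b * ‖x‖) ^ p = b ^ p * ‖x‖ ^ p :=
    mul_rpow hb.le (norm_nonneg x)
  constructor
  · rintro ⟨a, b, ha, hb, hf⟩
    have ht : 0 < b ^ p := rpow_pos_of_pos hb p
    have hZ : a * ∫ x : E, exp (-(b ^ p * ‖x‖ ^ p)) ∂μ = 1 := by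
      rw [← integral_const_mul, ← hf_one]
      exact integral_congr_ae (hf.mono fun x hx ↦ by dsimp only at hx ⊢; rw [hx, hscale hb])
    refine ⟨b ^ p, ht, hf.mono fun x hx ↦ ?_⟩
    dsimp only at hx
    rw [hx, hscale hb, expNormRpowDensity,
      eq_div_iff (integral_exp_neg_mul_norm_rpow_pos μ hp ht).ne', mul_right_comm, hZ, one_mul]
  · rintro ⟨t, ht, hf⟩
    refine ⟨(∫ x : E, exp (-(t * ‖x‖ ^ p)) ∂μ)⁻¹, t ^ p⁻¹,
      inv_pos.mpr (integral_exp_neg_mul_norm_rpow_pos μ hp ht), rpow_pos_of_pos ht _,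
      hf.mono fun x hx ↦ ?_⟩
    dsimp only
    rw [hx, hscale (rpow_pos_of_pos ht _), ← rpow_mul ht.le, inv_mul_cancel₀ hp.ne', rpow_one,
      expNormRpowDensity, div_eq_inv_mul]

theorem carlson_levin_addHaar (hp : 0 < p) {f : E → ℝ} (hf_nonneg : ∀ x, 0 ≤ f x)
    (hf_int : Integrable f μ) (hf_one : ∫ x, f x ∂μ = 1)
    (hmom : Integrable (fun x ↦ ‖x‖ ^ p * f x) μ)
    (hent : Integrable (fun x ↦ f x * log (f x)) μ) :
    Dnp1 (finrank ℝ E) p / (finrank ℝ E * μ.real (ball 0 1)) ^ (p / finrank ℝ E) *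
        exp (-(p / finrank ℝ E) * ∫ x, f x * log (f x) ∂μ) ≤ ∫ x, ‖x‖ ^ p * f x ∂μ ∧
      (∫ x, ‖x‖ ^ p * f x ∂μ =
          Dnp1 (finrank ℝ E) p / (finrank ℝ E * μ.real (ball 0 1)) ^ (p / finrank ℝ E) *
            exp (-(p / finrank ℝ E) * ∫ x, f x * log (f x) ∂μ) ↔
        ∃ a b : ℝ, 0 < a ∧ 0 < b ∧ f =ᵐ[μ] fun x ↦ a * exp (-(b * ‖x‖) ^ p)) := by
  have hd : (0 : ℝ) < finrank ℝ E := Nat.cast_pos.mpr finrank_pos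
  set M := ∫ x, ‖x‖ ^ p * f x ∂μ
  have hM : 0 < M := integral_norm_rpow_mul_pos μ hp hf_nonneg hf_one hmom
  -- the `p`-th moment of `g_t` is `finrank ℝ E / (p t)`, so this `t` matches the moment of `f`
  set t := finrank ℝ E / (p * M)
  have ht : 0 < t := by positivity
  have htM : t * M = finrank ℝ E / p := by
    rw [div_mul_eq_mul_div, mul_div_mul_right _ _ hM.ne']
  obtain ⟨hgibbs, hgibbs_eq⟩ := integral_mul_log_le_integral_mul_log hf_nonneg
    (expNormRpowDensity_pos μ hp ht) hf_int (integrable_expNormRpowDensity μ hp ht)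
    (by rw [hf_one, integral_expNormRpowDensity μ hp ht]) hent
    (integrable_mul_log_expNormRpowDensity μ hp ht hf_int hmom)
  rw [integral_mul_log_expNormRpowDensity μ hp ht hf_int hf_one hmom,
    integral_exp_neg_mul_norm_rpow μ hp ht] at hgibbs hgibbs_eq
  rw [Dnp1_div_mul_exp_eq finrank_pos hp (measureReal_unitBall_pos μ) ht htM]
  set gap := ∫ x, f x * log (f x) ∂μ + t * M +
    log (μ.real (ball 0 1) * Gamma (finrank ℝ E / p + 1) * t ^ (-(finrank ℝ E / p)))
  have hgap : 0 ≤ gap := by linarith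
  refine ⟨mul_le_of_le_one_right hM.le (exp_le_one_iff.mpr ?_), ?_⟩
  · exact mul_nonpos_of_nonpos_of_nonneg (neg_nonpos.mpr (div_pos hp hd).le) hgap
  rw [eq_comm, mul_eq_left₀ hM.ne', exp_eq_one_iff, mul_eq_zero, neg_eq_zero,
    or_iff_right (div_pos hp hd).ne', exists_ae_eq_mul_exp_iff μ hp hf_one]
  refine ⟨fun hgap0 ↦ ⟨t, ht, hgibbs_eq.mp (by linarith)⟩, ?_⟩
  rintro ⟨s, hs, hfs⟩
  rw [eq_div_of_ae_eq_expNormRpowDensity μ hp hs hfs] at hfs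
  linarith [hgibbs_eq.mpr hfs]

/-- Carlson–Levin inequality, case `λ = 1`: for a probability density `f` on `ℝⁿ` with
finite `p`-th moment and finite entropy,
`∫ |x|^p f(x) dx ≥ (D_{n,p,1}/(n ω_n)^(p/n)) exp(-(p/n) ∫ f log f)`,
with equality iff `f(x) = a e^{-|b x|^p}` a.e. for some `a, b > 0`. -/
theorem carlson_levin_eq_one (n : ℕ) (hn : 1 ≤ n) (p : ℝ) (hp : 0 < p)
    (f : EuclideanSpace ℝ (Fin n) → ℝ)
    (hf_nonneg : ∀ x, 0 ≤ f x) (hf_int : Integrable f volume)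
    (hf_one : ∫ x, f x = 1)
    (hmom : Integrable (fun x : EuclideanSpace ℝ (Fin n) => ‖x‖ ^ p * f x) volume)
    (hent : Integrable (fun x => f x * Real.log (f x)) volume) :
    ((∫ x : EuclideanSpace ℝ (Fin n), ‖x‖ ^ p * f x)
        ≥ (Dnp1 n p
            / ((n : ℝ) * (volume (Metric.ball (0:EuclideanSpace ℝ (Fin n)) 1)).toReal)
                ^ (p / (n : ℝ)))
          * Real.exp (-(p / (n : ℝ)) * ∫ x, f x * Real.log (f x))) ∧
    (((∫ x : EuclideanSpace ℝ (Fin n), ‖x‖ ^ p * f x)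
        = (Dnp1 n p
            / ((n : ℝ) * (volume (Metric.ball (0:EuclideanSpace ℝ (Fin n)) 1)).toReal)
                ^ (p / (n : ℝ)))
          * Real.exp (-(p / (n : ℝ)) * ∫ x, f x * Real.log (f x)))
      ↔ ∃ a b : ℝ, 0 < a ∧ 0 < b ∧
          f =ᵐ[volume] fun x => a * Real.exp (-(b * ‖x‖) ^ p)) := by
  have : Nontrivial (EuclideanSpace ℝ (Fin n)) := by
    rw [← finrank_pos_iff (R := ℝ), finrank_euclideanSpace_fin]
    exact hn
  simpa only [finrank_euclideanSpace_fin, Measure.real, ge_iff_le] using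
    carlson_levin_addHaar volume hp hf_nonneg hf_int hf_one hmom hent
end Radial
end

section
/- Fix d ≥ 1 and p ≥ 1. Let K and L be star-shaped subsets of R^d with radial functions ρ_K ∈ L^{d+p}(S^{d-1}) and ρ_L^{-1} ∈ L^{p}(S^{d-1}), ρ_L > 0 a.e. Define the dual mixed volume Ṽ_{-p,d}(K,L) = (1/d) ∫_{S^{d-1}} ρ_K(θ)^{d+p} ρ_L(θ)^{-p} dθ and vol_d via (1/d)∫ ρ^d. Then Ṽ_{-p,d}(K,L)^d ≥ vol_d(K)^{d+p} vol_d(L)^{-p}, with equality if and only if ρ_K = c ρ_L a.e. on S^{d-1} for some c > 0. -/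
/-!
Put `θ = d / (d + p)` and `r = d p / (d + p)`. Hölder's inequality for the conjugate exponents
`1 / θ` and `1 / (1 - θ)`, applied to `ρ_K^d ρ_L^{-r}` and `ρ_L^r` (whose product is `ρ_K^d`),
gives `∫ ρ_K^d ≤ (∫ ρ_K^{d+p} ρ_L^{-p})^θ (∫ ρ_L^d)^{1-θ}`; raised to the power `d + p` this is
the inequality, the factors `1 / d` cancelling by homogeneity. Equality in Hölder's inequality
holds iff `ρ_K^{d+p} ρ_L^{-p}` is a.e. proportional to `ρ_L^d`, i.e. iff `ρ_K` is a.e.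
proportional to `ρ_L`.
-/

open MeasureTheory Real

section Holder

variable {X : Type*} [MeasurableSpace X] {μ : Measure X}

lemma memLp_ofReal_iff_integrable_rpow {f : X → ℝ} {p : ℝ} (hp : 0 < p) (hf : 0 ≤ᵐ[μ] f)
    (hfm : AEStronglyMeasurable f μ) :
    MemLp f (ENNReal.ofReal p) μ ↔ Integrable (fun x => f x ^ p) μ := by
  rw [← integrable_norm_rpow_iff hfm (ENNReal.ofReal_pos.2 hp).ne' ENNReal.ofReal_ne_top,
    ENNReal.toReal_ofReal hp.le]
  refine integrable_congr ?_
  filter_upwards [hf] with x hx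
  rw [norm_of_nonneg hx]

theorem integral_mul_eq_Lp_mul_Lq_iff_of_nonneg {p q : ℝ} (hpq : p.HolderConjugate q)
    {f g : X → ℝ} (hf_nonneg : 0 ≤ᵐ[μ] f) (hg_nonneg : 0 ≤ᵐ[μ] g)
    (hf : MemLp f (ENNReal.ofReal p) μ) (hg : MemLp g (ENNReal.ofReal q) μ)
    (hf_pos : 0 < ∫ x, f x ^ p ∂μ) (hg_pos : 0 < ∫ x, g x ^ q ∂μ) :
    ∫ x, f x * g x ∂μ = (∫ x, f x ^ p ∂μ) ^ (1 / p) * (∫ x, g x ^ q ∂μ) ^ (1 / q) ↔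
      (fun x => (∫ x, g x ^ q ∂μ) * f x ^ p) =ᵐ[μ]
        fun x => (∫ x, f x ^ p ∂μ) * g x ^ q := by
  set A := ∫ x, f x ^ p ∂μ
  set C := ∫ x, g x ^ q ∂μ
  have hfp : Integrable (fun x => f x ^ p) μ :=
    (memLp_ofReal_iff_integrable_rpow hpq.pos hf_nonneg hf.1).1 hf
  have hgq : Integrable (fun x => g x ^ q) μ :=
    (memLp_ofReal_iff_integrable_rpow hpq.symm.pos hg_nonneg hg.1).1 hg
  have hfg : Integrable (fun x => f x * g x) μ := by
    have := hpq.ennrealOfReal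
    exact hf.integrable_mul hg
  set a := A ^ (1 / p)
  set c := C ^ (1 / q)
  have ha : 0 < a := rpow_pos_of_pos hf_pos _
  have hc : 0 < c := rpow_pos_of_pos hg_pos _
  have hf_div : ∀ x, 0 ≤ f x → (f x / a) ^ p = f x ^ p / A := fun x hx => by
    rw [div_rpow hx ha.le, ← rpow_mul hf_pos.le, one_div_mul_cancel hpq.ne_zero, rpow_one]
  have hg_div : ∀ x, 0 ≤ g x → (g x / c) ^ q = g x ^ q / C := fun x hx => by
    rw [div_rpow hx hc.le, ← rpow_mul hg_pos.le, one_div_mul_cancel hpq.symm.ne_zero, rpow_one]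
  -- the Young deficit of the normalized functions `f / ‖f‖_p` and `g / ‖g‖_q`
  set δ : X → ℝ := fun x => f x ^ p / A / p + g x ^ q / C / q - f x * g x / (a * c)
  have hδ : ∀ᵐ x ∂μ, 0 ≤ δ x ∧ (δ x = 0 ↔ C * f x ^ p = A * g x ^ q) := by
    filter_upwards [hf_nonneg, hg_nonneg] with x hfx hgx
    have young := young_inequality_of_nonneg (div_nonneg hfx ha.le) (div_nonneg hgx hc.le) hpq
    have young_eq :=
      young_inequality_eq_iff_of_nonneg (div_nonneg hfx ha.le) (div_nonneg hgx hc.le) hpq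
    rw [hf_div x hfx, hg_div x hgx, div_mul_div_comm] at young young_eq
    refine ⟨sub_nonneg.2 young, ?_⟩
    rw [sub_eq_zero, eq_comm, young_eq, div_eq_div_iff hf_pos.ne' hg_pos.ne', mul_comm C,
      mul_comm (g x ^ q)]
  have hsum : Integrable (fun x => f x ^ p / A / p + g x ^ q / C / q) μ :=
    ((hfp.div_const A).div_const p).add ((hgq.div_const C).div_const q)
  have hδ_int : Integrable δ μ := hsum.sub (hfg.div_const _)
  have hδ_integral : ∫ x, δ x ∂μ = 1 - (∫ x, f x * g x ∂μ) / (a * c) := by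
    rw [integral_sub hsum (hfg.div_const _), integral_add ((hfp.div_const A).div_const p)
      ((hgq.div_const C).div_const q)]
    simp only [integral_div]
    rw [div_self hf_pos.ne', div_self hg_pos.ne', one_div, one_div, hpq.inv_add_inv_eq_one]
  calc ∫ x, f x * g x ∂μ = a * c ↔ ∫ x, δ x ∂μ = 0 := by
        rw [hδ_integral, sub_eq_zero, eq_div_iff (mul_pos ha hc).ne', one_mul, eq_comm]
    _ ↔ δ =ᵐ[μ] 0 := integral_eq_zero_iff_of_nonneg_ae (hδ.mono fun x hx => hx.1) hδ_int
    _ ↔ _ := Filter.eventually_congr (hδ.mono fun x hx => hx.2)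

end Holder

namespace Real

lemma rpow_add_mul_rpow_neg_eq_iff {x y k d p : ℝ} (hx : 0 ≤ x) (hy : 0 < y) (hk : 0 ≤ k)
    (hdp : d + p ≠ 0) : x ^ (d + p) * y ^ (-p) = k ^ (d + p) * y ^ d ↔ x = k * y := by
  rw [rpow_neg hy.le, ← div_eq_mul_inv, div_eq_iff (rpow_pos_of_pos hy p).ne', mul_assoc,
    ← rpow_add hy, ← mul_rpow hk hy.le, rpow_left_inj hx (mul_nonneg hk hy.le) hdp]

lemma holderConjugate_add_div {d p : ℝ} (hd : 0 < d) (hp : 0 < p) :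
    ((d + p) / d).HolderConjugate ((d + p) / p) := by
  rw [holderConjugate_iff, inv_div, inv_div, ← add_div, div_self (by positivity)]
  exact ⟨(one_lt_div hd).2 (by linarith), rfl⟩

lemma mul_rpow_neg_rpow_add_div {x y d p : ℝ} (hx : 0 ≤ x) (hy : 0 < y) (hd : d ≠ 0)
    (hdp : d + p ≠ 0) :
    (x ^ d * y ^ (-(d * p / (d + p)))) ^ ((d + p) / d) = x ^ (d + p) * y ^ (-p) := by
  rw [mul_rpow (by positivity) (by positivity), ← rpow_mul hx, ← rpow_mul hy.le]
  congr 2 <;> field_simp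

lemma rpow_mul_div_rpow_add_div {y d p : ℝ} (hy : 0 ≤ y) (hp : p ≠ 0) (hdp : d + p ≠ 0) :
    (y ^ (d * p / (d + p))) ^ ((d + p) / p) = y ^ d := by
  rw [← rpow_mul hy]
  congr 1
  field_simp

variable {A B C D d p : ℝ}

lemma mul_geom_mean_rpow_add_mul_mul_rpow_neg (hA : 0 ≤ A) (hC : 0 < C) (hD : 0 < D)
    (hdp : 0 < d + p) :
    (D * (A ^ (d / (d + p)) * C ^ (p / (d + p)))) ^ (d + p) * (D * C) ^ (-p) =
      (D * A) ^ d := by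
  rw [mul_rpow hD.le (by positivity), mul_rpow (by positivity) (by positivity), ← rpow_mul hA,
    ← rpow_mul hC.le, div_mul_cancel₀ _ hdp.ne', div_mul_cancel₀ _ hdp.ne', mul_rpow hD.le hC.le,
    mul_rpow hD.le hA, rpow_add hD, rpow_neg hD.le, rpow_neg hC.le]
  field_simp

lemma mul_rpow_add_mul_rpow_neg_le_iff (hA : 0 ≤ A) (hB : 0 ≤ B) (hC : 0 < C) (hD : 0 < D)
    (hdp : 0 < d + p) :
    (D * B) ^ (d + p) * (D * C) ^ (-p) ≤ (D * A) ^ d ↔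
      B ≤ A ^ (d / (d + p)) * C ^ (p / (d + p)) := by
  rw [← mul_geom_mean_rpow_add_mul_mul_rpow_neg hA hC hD hdp,
    mul_le_mul_iff_of_pos_right (by positivity),
    rpow_le_rpow_iff (by positivity) (by positivity) (by positivity),
    mul_le_mul_iff_of_pos_left hD]

lemma mul_rpow_eq_mul_rpow_add_mul_rpow_neg_iff (hA : 0 ≤ A) (hB : 0 ≤ B) (hC : 0 < C)
    (hD : 0 < D) (hdp : 0 < d + p) :
    (D * A) ^ d = (D * B) ^ (d + p) * (D * C) ^ (-p) ↔
      B = A ^ (d / (d + p)) * C ^ (p / (d + p)) := by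
  rw [← mul_geom_mean_rpow_add_mul_mul_rpow_neg hA hC hD hdp, eq_comm,
    mul_left_inj' (by positivity), rpow_left_inj (by positivity) (by positivity) (by positivity),
    mul_right_inj' hD.ne']

end Real

section DualMixed

variable {X : Type*} [MeasurableSpace X] {μ : Measure X} {f g : X → ℝ} {d p : ℝ}

lemma ae_eq_mixed_iff_exists_ae_eq_const_mul (hdp : d + p ≠ 0) (hf : 0 ≤ᵐ[μ] f)
    (hg : ∀ᵐ x ∂μ, 0 < g x) (hA : 0 < ∫ x, f x ^ (d + p) * g x ^ (-p) ∂μ)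
    (hC : 0 < ∫ x, g x ^ d ∂μ) :
    (fun x => (∫ x, g x ^ d ∂μ) * (f x ^ (d + p) * g x ^ (-p))) =ᵐ[μ]
        (fun x => (∫ x, f x ^ (d + p) * g x ^ (-p) ∂μ) * g x ^ d) ↔
      ∃ c : ℝ, 0 < c ∧ f =ᵐ[μ] fun x => c * g x := by
  set A := ∫ x, f x ^ (d + p) * g x ^ (-p) ∂μ
  set C := ∫ x, g x ^ d ∂μ
  constructor
  · intro h
    set k := (A / C) ^ (1 / (d + p))
    have hk : k ^ (d + p) = A / C := by
      rw [← rpow_mul (div_pos hA hC).le, one_div_mul_cancel hdp, rpow_one]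
    refine ⟨k, by positivity, ?_⟩
    filter_upwards [h, hf, hg] with x hx hfx hgx
    rw [← rpow_add_mul_rpow_neg_eq_iff hfx hgx (by positivity) hdp, hk, div_mul_eq_mul_div,
      eq_div_iff hC.ne']
    linarith
  · rintro ⟨c, hc, hfc⟩
    have hmix : (fun x => f x ^ (d + p) * g x ^ (-p)) =ᵐ[μ] fun x => c ^ (d + p) * g x ^ d := by
      filter_upwards [hfc, hf, hg] with x hx hfx hgx
      exact (rpow_add_mul_rpow_neg_eq_iff hfx hgx hc.le hdp).2 hx
    have hA_eq : A = c ^ (d + p) * C := (integral_congr_ae hmix).trans (integral_const_mul _ _)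
    filter_upwards [hmix] with x hx
    rw [hx, hA_eq]
    ring

theorem integral_rpow_le_mixed_and_eq_iff (hd : 0 < d) (hp : 0 < p) (hf : 0 ≤ᵐ[μ] f)
    (hg : ∀ᵐ x ∂μ, 0 < g x) (hfm : AEMeasurable f μ) (hgm : AEMeasurable g μ)
    (hmix : Integrable (fun x => f x ^ (d + p) * g x ^ (-p)) μ)
    (hg_int : Integrable (fun x => g x ^ d) μ)
    (hf_pos : 0 < ∫ x, f x ^ d ∂μ) (hg_pos : 0 < ∫ x, g x ^ d ∂μ) :
    ∫ x, f x ^ d ∂μ ≤ (∫ x, f x ^ (d + p) * g x ^ (-p) ∂μ) ^ (d / (d + p)) *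
        (∫ x, g x ^ d ∂μ) ^ (p / (d + p)) ∧
      (∫ x, f x ^ d ∂μ = (∫ x, f x ^ (d + p) * g x ^ (-p) ∂μ) ^ (d / (d + p)) *
          (∫ x, g x ^ d ∂μ) ^ (p / (d + p)) ↔
        ∃ c : ℝ, 0 < c ∧ f =ᵐ[μ] fun x => c * g x) := by
  set P := (d + p) / d
  set Q := (d + p) / p
  set r := d * p / (d + p)
  have hdp : d + p ≠ 0 := by positivity
  have hPQ : P.HolderConjugate Q := holderConjugate_add_div hd hp
  have hP : 1 / P = d / (d + p) := one_div_div _ _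
  have hQ : 1 / Q = p / (d + p) := one_div_div _ _
  set U := fun x => f x ^ d * g x ^ (-r)
  set V := fun x => g x ^ r
  have hUP : (fun x => U x ^ P) =ᵐ[μ] fun x => f x ^ (d + p) * g x ^ (-p) := by
    filter_upwards [hf, hg] with x hfx hgx
    exact mul_rpow_neg_rpow_add_div hfx hgx hd.ne' hdp
  have hVQ : (fun x => V x ^ Q) =ᵐ[μ] fun x => g x ^ d := by
    filter_upwards [hg] with x hgx
    exact rpow_mul_div_rpow_add_div hgx.le hp.ne' hdp
  have hUV : (fun x => U x * V x) =ᵐ[μ] fun x => f x ^ d := by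
    filter_upwards [hg] with x hgx
    rw [mul_assoc, ← rpow_add hgx, neg_add_cancel, rpow_zero, mul_one]
  have hU0 : 0 ≤ᵐ[μ] U := by
    filter_upwards [hf, hg] with x (hfx : 0 ≤ f x) hgx
    positivity
  have hV0 : 0 ≤ᵐ[μ] V := by
    filter_upwards [hg] with x hgx
    positivity
  have hU : MemLp U (ENNReal.ofReal P) μ :=
    (memLp_ofReal_iff_integrable_rpow hPQ.pos hU0
      ((hfm.pow_const d).mul (hgm.pow_const _)).aestronglyMeasurable).2 (hmix.congr hUP.symm)
  have hV : MemLp V (ENNReal.ofReal Q) μ :=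
    (memLp_ofReal_iff_integrable_rpow hPQ.symm.pos hV0
      (hgm.pow_const _).aestronglyMeasurable).2 (hg_int.congr hVQ.symm)
  have hle := integral_mul_le_Lp_mul_Lq_of_nonneg hPQ hU0 hV0 hU hV
  rw [integral_congr_ae hUP, integral_congr_ae hVQ, integral_congr_ae hUV, hP, hQ] at hle
  have hA : 0 < ∫ x, f x ^ (d + p) * g x ^ (-p) ∂μ := by
    refine (integral_nonneg_of_ae ?_).lt_of_ne fun h => ?_
    · filter_upwards [hf, hg] with x (hfx : 0 ≤ f x) hgx
      positivity
    rw [← h, zero_rpow (by positivity), zero_mul] at hle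
    linarith
  have heq := integral_mul_eq_Lp_mul_Lq_iff_of_nonneg hPQ hU0 hV0 hU hV
    (by rwa [integral_congr_ae hUP]) (by rwa [integral_congr_ae hVQ])
  rw [integral_congr_ae hUP, integral_congr_ae hVQ, integral_congr_ae hUV, hP, hQ] at heq
  refine ⟨hle, heq.trans ((Filter.eventually_congr ?_).trans
    (ae_eq_mixed_iff_exists_ae_eq_const_mul hdp hf hg hA hg_pos))⟩
  filter_upwards [hUP, hVQ] with x hUx hVx
  rw [hUx, hVx]

end DualMixed

theorem dual_minkowski_first_general (d : ℕ) (hd : 1 ≤ d) (p : ℝ) (hp : 1 ≤ p)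
    (ρK ρL : EuclideanSpace ℝ (Fin d) → ℝ)
    (hρK_nonneg : ∀ u, 0 ≤ ρK u) (hρK_meas : Measurable ρK) (hρL_meas : Measurable ρL)
    (hρL_pos : ∀ᵐ u ∂(μH[(d:ℝ)-1]).restrict (Metric.sphere (0:EuclideanSpace ℝ (Fin d)) 1),
      0 < ρL u)
    (hL_int : IntegrableOn (fun u => ρL u ^ (d : ℝ))
      (Metric.sphere (0:EuclideanSpace ℝ (Fin d)) 1) (μH[(d:ℝ)-1]))
    (hmix_int : IntegrableOn (fun u => ρK u ^ ((d : ℝ) + p) * ρL u ^ (-p))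
      (Metric.sphere (0:EuclideanSpace ℝ (Fin d)) 1) (μH[(d:ℝ)-1]))
    (hvolK_pos : 0 < (1 / (d : ℝ)) * ∫ u in Metric.sphere (0:EuclideanSpace ℝ (Fin d)) 1,
      ρK u ^ (d : ℝ) ∂(μH[(d:ℝ)-1]))
    (hvolL_pos : 0 < (1 / (d : ℝ)) * ∫ u in Metric.sphere (0:EuclideanSpace ℝ (Fin d)) 1,
      ρL u ^ (d : ℝ) ∂(μH[(d:ℝ)-1])) :
    (((1 / (d : ℝ)) * ∫ u in Metric.sphere (0:EuclideanSpace ℝ (Fin d)) 1,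
          ρK u ^ ((d : ℝ) + p) * ρL u ^ (-p) ∂(μH[(d:ℝ)-1])) ^ (d : ℝ)
        ≥ ((1 / (d : ℝ)) * ∫ u in Metric.sphere (0:EuclideanSpace ℝ (Fin d)) 1,
              ρK u ^ (d : ℝ) ∂(μH[(d:ℝ)-1])) ^ ((d : ℝ) + p)
          * ((1 / (d : ℝ)) * ∫ u in Metric.sphere (0:EuclideanSpace ℝ (Fin d)) 1,
              ρL u ^ (d : ℝ) ∂(μH[(d:ℝ)-1])) ^ (-p)) ∧
    ((((1 / (d : ℝ)) * ∫ u in Metric.sphere (0:EuclideanSpace ℝ (Fin d)) 1,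
          ρK u ^ ((d : ℝ) + p) * ρL u ^ (-p) ∂(μH[(d:ℝ)-1])) ^ (d : ℝ)
        = ((1 / (d : ℝ)) * ∫ u in Metric.sphere (0:EuclideanSpace ℝ (Fin d)) 1,
              ρK u ^ (d : ℝ) ∂(μH[(d:ℝ)-1])) ^ ((d : ℝ) + p)
          * ((1 / (d : ℝ)) * ∫ u in Metric.sphere (0:EuclideanSpace ℝ (Fin d)) 1,
              ρL u ^ (d : ℝ) ∂(μH[(d:ℝ)-1])) ^ (-p))
      ↔ ∃ c : ℝ, 0 < c ∧
          (fun u => ρK u)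
            =ᵐ[(μH[(d:ℝ)-1]).restrict (Metric.sphere (0:EuclideanSpace ℝ (Fin d)) 1)]
          fun u => c * ρL u) := by
  have hd0 : (0 : ℝ) < d := by exact_mod_cast hd
  have hp0 : (0 : ℝ) < p := by linarith
  have hdp : (0 : ℝ) < d + p := by positivity
  have hD : (0 : ℝ) < 1 / d := by positivity
  have hB := pos_of_mul_pos_right hvolK_pos hD.le
  have hC := pos_of_mul_pos_right hvolL_pos hD.le
  have hA : 0 ≤ ∫ u in Metric.sphere (0:EuclideanSpace ℝ (Fin d)) 1,
      ρK u ^ ((d : ℝ) + p) * ρL u ^ (-p) ∂(μH[(d:ℝ)-1]) := by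
    refine integral_nonneg_of_ae ?_
    filter_upwards [hρL_pos] with u hu
    have := hρK_nonneg u
    positivity
  obtain ⟨hle, heq⟩ := integral_rpow_le_mixed_and_eq_iff hd0 hp0 (ae_of_all _ hρK_nonneg)
    hρL_pos hρK_meas.aemeasurable hρL_meas.aemeasurable hmix_int hL_int hB hC
  exact ⟨(mul_rpow_add_mul_rpow_neg_le_iff hA hB.le hC hD hdp).2 hle,
    (mul_rpow_eq_mul_rpow_add_mul_rpow_neg_iff hA hB.le hC hD hdp).trans heq⟩

/-- Dual Minkowski first inequality: for `d ≥ 1`, `p ≥ 1`, and radial functions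
`ρ_K ∈ L^{d+p}(S^{d-1})`, `ρ_L` positive a.e. with `ρ_L⁻¹ ∈ L^p(S^{d-1})`, set
`Ṽ_{-p,d}(K,L) = (1/d) ∫ ρ_K^{d+p} ρ_L^{-p}` and `vol_d = (1/d) ∫ ρ^d`. Then
`Ṽ_{-p,d}(K,L)^d ≥ vol_d(K)^{d+p} vol_d(L)^{-p}`, with equality iff `ρ_K = c ρ_L`
a.e. for some `c > 0`. -/
theorem dual_minkowski_first (d : ℕ) (hd : 1 ≤ d) (p : ℝ) (hp : 1 ≤ p)
    (ρK ρL : EuclideanSpace ℝ (Fin d) → ℝ)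
    (hρK_nonneg : ∀ u, 0 ≤ ρK u) (hρK_meas : Measurable ρK) (hρL_meas : Measurable ρL)
    (hρL_pos : ∀ᵐ u ∂(μH[(d:ℝ)-1]).restrict (Metric.sphere (0:EuclideanSpace ℝ (Fin d)) 1),
      0 < ρL u)
    (hK_int : IntegrableOn (fun u => ρK u ^ ((d : ℝ) + p))
      (Metric.sphere (0:EuclideanSpace ℝ (Fin d)) 1) (μH[(d:ℝ)-1]))
    (hL_int : IntegrableOn (fun u => ρL u ^ (d : ℝ))
      (Metric.sphere (0:EuclideanSpace ℝ (Fin d)) 1) (μH[(d:ℝ)-1]))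
    (hmix_int : IntegrableOn (fun u => ρK u ^ ((d : ℝ) + p) * ρL u ^ (-p))
      (Metric.sphere (0:EuclideanSpace ℝ (Fin d)) 1) (μH[(d:ℝ)-1]))
    (hvolK_pos : 0 < (1 / (d : ℝ)) * ∫ u in Metric.sphere (0:EuclideanSpace ℝ (Fin d)) 1,
      ρK u ^ (d : ℝ) ∂(μH[(d:ℝ)-1]))
    (hvolL_pos : 0 < (1 / (d : ℝ)) * ∫ u in Metric.sphere (0:EuclideanSpace ℝ (Fin d)) 1,
      ρL u ^ (d : ℝ) ∂(μH[(d:ℝ)-1])) :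
    (((1 / (d : ℝ)) * ∫ u in Metric.sphere (0:EuclideanSpace ℝ (Fin d)) 1,
          ρK u ^ ((d : ℝ) + p) * ρL u ^ (-p) ∂(μH[(d:ℝ)-1])) ^ (d : ℝ)
        ≥ ((1 / (d : ℝ)) * ∫ u in Metric.sphere (0:EuclideanSpace ℝ (Fin d)) 1,
              ρK u ^ (d : ℝ) ∂(μH[(d:ℝ)-1])) ^ ((d : ℝ) + p)
          * ((1 / (d : ℝ)) * ∫ u in Metric.sphere (0:EuclideanSpace ℝ (Fin d)) 1,
              ρL u ^ (d : ℝ) ∂(μH[(d:ℝ)-1])) ^ (-p)) ∧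
    ((((1 / (d : ℝ)) * ∫ u in Metric.sphere (0:EuclideanSpace ℝ (Fin d)) 1,
          ρK u ^ ((d : ℝ) + p) * ρL u ^ (-p) ∂(μH[(d:ℝ)-1])) ^ (d : ℝ)
        = ((1 / (d : ℝ)) * ∫ u in Metric.sphere (0:EuclideanSpace ℝ (Fin d)) 1,
              ρK u ^ (d : ℝ) ∂(μH[(d:ℝ)-1])) ^ ((d : ℝ) + p)
          * ((1 / (d : ℝ)) * ∫ u in Metric.sphere (0:EuclideanSpace ℝ (Fin d)) 1,
              ρL u ^ (d : ℝ) ∂(μH[(d:ℝ)-1])) ^ (-p))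
      ↔ ∃ c : ℝ, 0 < c ∧
          (fun u => ρK u)
            =ᵐ[(μH[(d:ℝ)-1]).restrict (Metric.sphere (0:EuclideanSpace ℝ (Fin d)) 1)]
          fun u => c * ρL u) :=
  dual_minkowski_first_general d hd p hp ρK ρL hρK_nonneg hρK_meas hρL_meas hρL_pos hL_int hmix_int
    hvolK_pos hvolL_pos
end

section
/- Let p ≥ 1 and n ≥ 1. For a probability density g on R^n with finite p-th moment and u ∈ S^{n-1}, suppose g(|x|u) = a(u)(1 + |b(u)x|^p)^{-1/(1-λ)} for a.e. x ∈ R^n with n/(n+p) < λ < 1 and a(u), b(u) > 0, and suppose ∫_{R^n} g(|x|u)^λ dx = γ ∫_{R^n} g(|x|u) dx for a constant γ > 0 independent of u. Then a(u) is constant a.e. on S^{n-1}, equal to ((λp - n(1-λ))γ/(λp))^{1/(λ-1)}. -/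
/-!
Along each ray the density is the explicit profile `a (1 + (b r)^p)^{-s}` with `s = 1/(1-λ)`,
and `g^λ` is the same profile with exponent `sλ = s - 1`. In polar coordinates both integrals
become `a^t · n|B₁| · J(s')` with `J(s) = ∫₀^∞ y^{n-1} (1 + b^p y^p)^{-s} dy`, and integrating
`y^n (1 + b^p y^p)^{1-s}` by parts gives the Beta-function recurrence
`((s-1)p - n) J(s-1) = (s-1)p J(s)`, in which `b` no longer appears. The ratio condition then
reads `a^{λ-1} λp = γ (λp - n(1-λ))`, which determines `a`.
-/

open MeasureTheory Set Filter Topology Real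

/-- `∫₀^∞ y^k (1 + c y^p)^{-s} dy`; the substitution `t = c y^p` turns it into a multiple of
`B((k+1)/p, s - (k+1)/p)`. -/
noncomputable def betaTypeIntegral (p c k s : ℝ) : ℝ :=
  ∫ y in Ioi 0, y ^ k * (1 + c * y ^ p) ^ (-s)

section BetaTypeIntegral

variable {p c k s : ℝ}

lemma one_add_mul_rpow_rpow_neg_le (hc : 0 < c) (hs : 0 ≤ s) {y : ℝ} (hy : 0 < y) :
    (1 + c * y ^ p) ^ (-s) ≤ c ^ (-s) * y ^ (-(s * p)) := by
  have hcy : 0 < c * y ^ p := by positivity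
  calc (1 + c * y ^ p) ^ (-s) ≤ (c * y ^ p) ^ (-s) :=
        rpow_le_rpow_of_nonpos hcy (by linarith) (by linarith)
    _ = c ^ (-s) * y ^ (-(s * p)) := by
        rw [mul_rpow hc.le (by positivity), ← rpow_mul hy.le]; ring_nf

lemma integrableOn_rpow_mul_one_add_mul_rpow_neg (hp : 0 < p) (hc : 0 < c) (hk : 0 ≤ k)
    (hks : k + 1 < s * p) :
    IntegrableOn (fun y : ℝ => y ^ k * (1 + c * y ^ p) ^ (-s)) (Ioi 0) := by
  have hs : 0 ≤ s := by
    by_contra! h; nlinarith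
  have hmeas : Measurable fun y : ℝ => y ^ k * (1 + c * y ^ p) ^ (-s) := by fun_prop
  rw [← Ioc_union_Ioi_eq_Ioi zero_le_one]
  refine IntegrableOn.union ?_ ?_
  · refine Measure.integrableOn_of_bounded (M := 1) measure_Ioc_lt_top.ne
      hmeas.aestronglyMeasurable ?_
    filter_upwards [ae_restrict_mem measurableSet_Ioc] with y ⟨hy0, hy1⟩
    have hQ : 1 ≤ 1 + c * y ^ p := le_add_of_nonneg_right (by positivity)
    rw [norm_of_nonneg (by positivity)]
    exact mul_le_one₀ (rpow_le_one hy0.le hy1 hk) (by positivity)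
      (rpow_le_one_of_one_le_of_nonpos hQ (by linarith))
  · refine Integrable.mono' (((integrableOn_Ioi_rpow_of_lt (a := k - s * p) (by linarith)
      one_pos).const_mul (c ^ (-s)))) hmeas.aestronglyMeasurable ?_
    filter_upwards [ae_restrict_mem measurableSet_Ioi] with y hy
    have hy0 : 0 < y := one_pos.trans hy
    rw [norm_of_nonneg (by positivity)]
    calc y ^ k * (1 + c * y ^ p) ^ (-s) ≤ y ^ k * (c ^ (-s) * y ^ (-(s * p))) :=
          mul_le_mul_of_nonneg_left (one_add_mul_rpow_rpow_neg_le hc hs hy0) (by positivity)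
      _ = c ^ (-s) * y ^ (k - s * p) := by
          rw [sub_eq_add_neg, rpow_add hy0]; ring

lemma betaTypeIntegral_pos (hp : 0 < p) (hc : 0 < c) (hk : 0 ≤ k) (hks : k + 1 < s * p) :
    0 < betaTypeIntegral p c k s := by
  have hpos : ∀ y ∈ Ioi (0 : ℝ), 0 < y ^ k * (1 + c * y ^ p) ^ (-s) := fun y hy => by
    have : (0 : ℝ) < y := hy
    positivity
  rw [betaTypeIntegral, setIntegral_pos_iff_support_of_nonneg_ae
    ((ae_restrict_iff' measurableSet_Ioi).2 (.of_forall fun y hy => (hpos y hy).le))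
    (integrableOn_rpow_mul_one_add_mul_rpow_neg hp hc hk hks)]
  calc (0 : ENNReal) < volume (Ioi (0 : ℝ)) := by simp
    _ ≤ _ := measure_mono fun y hy => show y ∈ Function.support _ ∩ _ from ⟨(hpos y hy).ne', hy⟩

lemma betaTypeIntegral_sub_one_eq_add (hp : 0 < p) (hc : 0 < c) (hk : 0 ≤ k)
    (hks : k + 1 < (s - 1) * p) :
    betaTypeIntegral p c k (s - 1) =
      betaTypeIntegral p c k s + c * betaTypeIntegral p c (k + p) s := by
  have hsplit : EqOn (fun y : ℝ => y ^ k * (1 + c * y ^ p) ^ (-(s - 1)))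
      (fun y => y ^ k * (1 + c * y ^ p) ^ (-s) + c * (y ^ (k + p) * (1 + c * y ^ p) ^ (-s)))
      (Ioi 0) := fun y (hy : 0 < y) => by
    have hQ : 0 < 1 + c * y ^ p := by positivity
    dsimp only
    rw [show -(s - 1) = 1 + -s by ring, rpow_add hQ, rpow_one, rpow_add hy]
    ring
  rw [betaTypeIntegral, setIntegral_congr_fun measurableSet_Ioi hsplit, integral_add
    (integrableOn_rpow_mul_one_add_mul_rpow_neg hp hc hk (by nlinarith))
    ((integrableOn_rpow_mul_one_add_mul_rpow_neg hp hc (by positivity) (by linarith)).const_mul c),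
    integral_const_mul, betaTypeIntegral, betaTypeIntegral]

lemma hasDerivAt_rpow_mul_one_add_mul_rpow (hc : 0 ≤ c) {y : ℝ} (hy : 0 < y) :
    HasDerivAt (fun y : ℝ => y ^ (k + 1) * (1 + c * y ^ p) ^ (-(s - 1)))
      ((k + 1) * (y ^ k * (1 + c * y ^ p) ^ (-(s - 1)))
        - (s - 1) * p * c * (y ^ (k + p) * (1 + c * y ^ p) ^ (-s))) y := by
  have hQ : 0 < 1 + c * y ^ p := by positivity
  have hQ' : HasDerivAt (fun y : ℝ => 1 + c * y ^ p) (c * (p * y ^ (p - 1))) y :=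
    ((hasDerivAt_rpow_const (Or.inl hy.ne')).const_mul c).const_add 1
  have hpow : HasDerivAt (fun y : ℝ => y ^ (k + 1) * (1 + c * y ^ p) ^ (-(s - 1))) _ y :=
    (hasDerivAt_rpow_const (p := k + 1) (Or.inl hy.ne')).mul (hQ'.rpow_const (Or.inl hQ.ne'))
  convert hpow using 1
  have hyp : y ^ p = y ^ (p - 1) * y := by rw [← rpow_add_one hy.ne', sub_add_cancel]
  rw [show -(s - 1) - 1 = -s by ring, add_sub_cancel_right, rpow_add hy k p,
    rpow_add_one hy.ne' k]
  linear_combination (-(s - 1) * p * c * y ^ k * (1 + c * y ^ p) ^ (-s)) * hyp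

lemma betaTypeIntegral_integration_by_parts (hp : 0 < p) (hc : 0 < c) (hk : 0 ≤ k)
    (hks : k + 1 < (s - 1) * p) :
    (k + 1) * betaTypeIntegral p c k (s - 1) =
      (s - 1) * p * c * betaTypeIntegral p c (k + p) s := by
  set F : ℝ → ℝ := fun y => y ^ (k + 1) * (1 + c * y ^ p) ^ (-(s - 1))
  have hcont : ContinuousWithinAt F (Ici 0) 0 := by
    have hQ : ContinuousAt (fun y : ℝ => 1 + c * y ^ p) 0 :=
      (continuous_const.add (continuous_const.mul
        (continuous_id.rpow_const fun _ => Or.inr hp.le))).continuousAt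
    have hQ0 : (1 : ℝ) + c * 0 ^ p ≠ 0 := by simp [zero_rpow hp.ne']
    exact ((continuousAt_rpow_const _ _ (Or.inr (by linarith))).mul
      (hQ.rpow_const (Or.inl hQ0))).continuousWithinAt
  have hF0 : F 0 = 0 := by simp [F, zero_rpow (show k + 1 ≠ 0 by linarith)]
  have hlim : Tendsto F atTop (𝓝 0) := by
    have hdecay : Tendsto (fun y : ℝ => c ^ (-(s - 1)) * y ^ (-((s - 1) * p - (k + 1))))
        atTop (𝓝 0) := by
      simpa only [mul_zero] using
        (tendsto_rpow_neg_atTop (by linarith)).const_mul (c ^ (-(s - 1)))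
    refine squeeze_zero' ?_ ?_ hdecay
    · filter_upwards [eventually_gt_atTop 0] with y hy
      positivity
    · filter_upwards [eventually_gt_atTop 0] with y hy
      calc F y ≤ y ^ (k + 1) * (c ^ (-(s - 1)) * y ^ (-((s - 1) * p))) :=
            mul_le_mul_of_nonneg_left (one_add_mul_rpow_rpow_neg_le hc
              (by nlinarith) hy) (by positivity)
        _ = c ^ (-(s - 1)) * y ^ (-((s - 1) * p - (k + 1))) := by
            rw [show -((s - 1) * p - (k + 1)) = k + 1 + -((s - 1) * p) by ring,
              rpow_add hy (k + 1)]
            ring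
  have hint₁ := (integrableOn_rpow_mul_one_add_mul_rpow_neg hp hc hk hks).const_mul (k + 1)
  have hint₂ := (integrableOn_rpow_mul_one_add_mul_rpow_neg (k := k + p) (s := s) hp hc
    (by positivity) (by linarith)).const_mul ((s - 1) * p * c)
  have hftc := integral_Ioi_of_hasDerivAt_of_tendsto hcont
    (fun y hy => hasDerivAt_rpow_mul_one_add_mul_rpow hc.le hy) (hint₁.sub hint₂) hlim
  rw [hF0, sub_zero, integral_sub hint₁ hint₂, integral_const_mul, integral_const_mul,
    sub_eq_zero] at hftc
  exact hftc

lemma betaTypeIntegral_recurrence (hp : 0 < p) (hc : 0 < c) (hk : 0 ≤ k)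
    (hks : k + 1 < (s - 1) * p) :
    ((s - 1) * p - (k + 1)) * betaTypeIntegral p c k (s - 1) =
      (s - 1) * p * betaTypeIntegral p c k s := by
  linear_combination (s - 1) * p * betaTypeIntegral_sub_one_eq_add hp hc hk hks
    - betaTypeIntegral_integration_by_parts hp hc hk hks

lemma betaTypeIntegral_recurrence_of_lt_one {lam : ℝ} (hp : 0 < p) (hc : 0 < c) (hk : 0 ≤ k)
    (hlam1 : lam < 1) (hklam : (k + 1) * (1 - lam) < lam * p) :
    (lam * p - (k + 1) * (1 - lam)) * betaTypeIntegral p c k (1 / (1 - lam) * lam) =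
      lam * p * betaTypeIntegral p c k (1 / (1 - lam)) := by
  have hlam1' : 0 < 1 - lam := by linarith
  have hs : 1 / (1 - lam) * lam = 1 / (1 - lam) - 1 := by field_simp; ring
  have hsp : (1 / (1 - lam) - 1) * p * (1 - lam) = lam * p := by field_simp; ring
  have hrec := betaTypeIntegral_recurrence (s := 1 / (1 - lam)) hp hc hk
    (by rw [← mul_lt_mul_iff_of_pos_right hlam1', hsp]; exact hklam)
  rw [hs]
  linear_combination (1 - lam) * hrec - (betaTypeIntegral p c k (1 / (1 - lam) - 1)
    - betaTypeIntegral p c k (1 / (1 - lam))) * hsp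

end BetaTypeIntegral

lemma integral_fun_norm_euclideanSpace {n : ℕ} (hn : 1 ≤ n) (f : ℝ → ℝ) :
    ∫ x : EuclideanSpace ℝ (Fin n), f ‖x‖ =
      n * volume.real (Metric.ball (0 : EuclideanSpace ℝ (Fin n)) 1) *
        ∫ y in Ioi 0, y ^ ((n : ℝ) - 1) * f y := by
  have : Nontrivial (EuclideanSpace ℝ (Fin n)) :=
    Module.nontrivial_of_finrank_pos (R := ℝ) (by rw [finrank_euclideanSpace_fin]; omega)
  have hpolar := integral_fun_norm_addHaar (volume : Measure (EuclideanSpace ℝ (Fin n))) f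
  rw [finrank_euclideanSpace_fin, nsmul_eq_mul, smul_eq_mul] at hpolar
  rw [hpolar, mul_assoc]
  congr 2
  refine setIntegral_congr_fun measurableSet_Ioi fun y _ => ?_
  rw [smul_eq_mul, ← rpow_natCast, Nat.cast_sub hn, Nat.cast_one]

lemma integral_one_add_mul_norm_rpow_neg {n : ℕ} (hn : 1 ≤ n) {p β : ℝ} (hβ : 0 ≤ β) (s : ℝ) :
    ∫ x : EuclideanSpace ℝ (Fin n), (1 + (β * ‖x‖) ^ p) ^ (-s) =
      n * volume.real (Metric.ball (0 : EuclideanSpace ℝ (Fin n)) 1) *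
        betaTypeIntegral p (β ^ p) ((n : ℝ) - 1) s := by
  rw [integral_fun_norm_euclideanSpace hn fun y => (1 + (β * y) ^ p) ^ (-s), betaTypeIntegral]
  congr 1
  refine setIntegral_congr_fun measurableSet_Ioi fun y (hy : 0 < y) => ?_
  rw [mul_rpow hβ hy.le]

section RadialProfile

variable {n : ℕ} {f : EuclideanSpace ℝ (Fin n) → ℝ} {A β p : ℝ}

lemma integral_rpow_of_ae_eq_one_add_norm_rpow (hn : 1 ≤ n) (hA : 0 ≤ A) (hβ : 0 ≤ β) {s : ℝ}
    (hf : ∀ᵐ x ∂volume, f x = A * (1 + (β * ‖x‖) ^ p) ^ (-s)) (t : ℝ) :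
    ∫ x, f x ^ t = A ^ t * (n * volume.real (Metric.ball (0 : EuclideanSpace ℝ (Fin n)) 1) *
      betaTypeIntegral p (β ^ p) ((n : ℝ) - 1) (s * t)) := by
  rw [← integral_one_add_mul_norm_rpow_neg hn hβ, ← integral_const_mul]
  refine integral_congr_ae (hf.mono fun x hx => ?_)
  have hQ : 0 ≤ 1 + (β * ‖x‖) ^ p := by positivity
  dsimp only
  rw [hx, mul_rpow hA (by positivity), ← rpow_mul hQ, neg_mul]

lemma integral_of_ae_eq_one_add_norm_rpow (hn : 1 ≤ n) (hA : 0 ≤ A) (hβ : 0 ≤ β) {s : ℝ}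
    (hf : ∀ᵐ x ∂volume, f x = A * (1 + (β * ‖x‖) ^ p) ^ (-s)) :
    ∫ x, f x = A * (n * volume.real (Metric.ball (0 : EuclideanSpace ℝ (Fin n)) 1) *
      betaTypeIntegral p (β ^ p) ((n : ℝ) - 1) s) := by
  simpa only [rpow_one, mul_one] using integral_rpow_of_ae_eq_one_add_norm_rpow hn hA hβ hf 1

lemma integral_pos_of_ae_eq_one_add_norm_rpow (hn : 1 ≤ n) (hp : 0 < p) (hA : 0 < A)
    (hβ : 0 < β) {s : ℝ} (hs : n < s * p)
    (hf : ∀ᵐ x ∂volume, f x = A * (1 + (β * ‖x‖) ^ p) ^ (-s)) :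
    0 < ∫ x, f x := by
  rw [integral_of_ae_eq_one_add_norm_rpow hn hA.le hβ.le hf]
  have hball : 0 < volume.real (Metric.ball (0 : EuclideanSpace ℝ (Fin n)) 1) :=
    ENNReal.toReal_pos (Metric.measure_ball_pos volume 0 one_pos).ne' measure_ball_lt_top.ne
  have hJ := betaTypeIntegral_pos hp (rpow_pos_of_pos hβ p) (sub_nonneg.2 (Nat.one_le_cast.2 hn))
    (by rwa [sub_add_cancel])
  have hn0 : (0 : ℝ) < n := by exact_mod_cast hn
  positivity

lemma mul_integral_rpow_eq_of_ae_eq_one_add_norm_rpow (hn : 1 ≤ n) (hp : 0 < p) (hA : 0 < A)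
    (hβ : 0 < β) {lam : ℝ} (hlam1 : lam < 1) (hnlam : n * (1 - lam) < lam * p)
    (hf : ∀ᵐ x ∂volume, f x = A * (1 + (β * ‖x‖) ^ p) ^ (-(1 / (1 - lam)))) :
    (lam * p - n * (1 - lam)) * ∫ x, f x ^ lam = lam * p * A ^ (lam - 1) * ∫ x, f x := by
  have hsplit : A ^ lam = A ^ (lam - 1) * A := by rw [← rpow_add_one hA.ne', sub_add_cancel]
  rw [integral_rpow_of_ae_eq_one_add_norm_rpow hn hA.le hβ.le hf,
    integral_of_ae_eq_one_add_norm_rpow hn hA.le hβ.le hf, hsplit]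
  have hrec := betaTypeIntegral_recurrence_of_lt_one hp (rpow_pos_of_pos hβ p)
    (sub_nonneg.2 (Nat.one_le_cast.2 hn)) hlam1 (by rwa [sub_add_cancel])
  linear_combination A ^ (lam - 1) * A *
    (n * volume.real (Metric.ball (0 : EuclideanSpace ℝ (Fin n)) 1)) * hrec

end RadialProfile

theorem radial_equality_constant_general (n : ℕ) (hn : 1 ≤ n) (p lam : ℝ) (hp : 1 ≤ p)
    (hlam : (n : ℝ) / ((n : ℝ) + p) < lam) (hlam1 : lam < 1)
    (g : EuclideanSpace ℝ (Fin n) → ℝ)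
    (a b : EuclideanSpace ℝ (Fin n) → ℝ)
    (ha_pos : ∀ u, ‖u‖ = 1 → 0 < a u) (hb_pos : ∀ u, ‖u‖ = 1 → 0 < b u)
    (hform : ∀ u : EuclideanSpace ℝ (Fin n), ‖u‖ = 1 →
      ∀ᵐ x : EuclideanSpace ℝ (Fin n) ∂volume,
        g (‖x‖ • u) = a u * (1 + (b u * ‖x‖) ^ p) ^ (-(1 / (1 - lam))))
    (γ : ℝ)
    (hratio : ∀ u : EuclideanSpace ℝ (Fin n), ‖u‖ = 1 →
      (∫ x : EuclideanSpace ℝ (Fin n), g (‖x‖ • u) ^ lam)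
        = γ * ∫ x : EuclideanSpace ℝ (Fin n), g (‖x‖ • u)) :
    ∀ u : EuclideanSpace ℝ (Fin n), ‖u‖ = 1 →
      a u = ((lam * p - (n : ℝ) * (1 - lam)) * γ / (lam * p)) ^ (1 / (lam - 1)) := by
  intro u hu
  have hA := ha_pos u hu
  have hp0 : 0 < p := by linarith
  have hlam1' : 0 < 1 - lam := by linarith
  have hlam0 : 0 < lam := (div_pos (by positivity) (by positivity)).trans hlam
  have hnlam : n * (1 - lam) < lam * p := by
    nlinarith [(div_lt_iff₀ (by positivity : (0 : ℝ) < n + p)).1 hlam]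
  have hmass := integral_pos_of_ae_eq_one_add_norm_rpow hn hp0 hA (hb_pos u hu)
    (by rw [one_div_mul_eq_div, lt_div_iff₀ hlam1']; nlinarith) (hform u hu)
  have hid := mul_integral_rpow_eq_of_ae_eq_one_add_norm_rpow hn hp0 hA (hb_pos u hu) hlam1
    hnlam (hform u hu)
  rw [hratio u hu] at hid
  have hpow : a u ^ (lam - 1) = (lam * p - n * (1 - lam)) * γ / (lam * p) := by
    rw [eq_div_iff (by positivity)]
    exact mul_right_cancel₀ hmass.ne' (by linear_combination -hid)
  rw [← hpow, one_div, rpow_rpow_inv hA.le (by linarith)]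

/-- If a probability density `g` on `ℝⁿ` with finite `p`-th moment satisfies, for each
`u ∈ S^{n-1}`, `g(|x|u) = a(u)(1 + |b(u)x|^p)^{-1/(1-λ)}` for a.e. `x`, where
`n/(n+p) < λ < 1` and `a(u), b(u) > 0`, and if
`∫ g(|x|u)^λ dx = γ ∫ g(|x|u) dx` with `γ > 0` independent of `u`, then `a(u)` is
constant on the sphere, equal to `((λp - n(1-λ))γ/(λp))^{1/(λ-1)}`. -/
theorem radial_equality_constant (n : ℕ) (hn : 1 ≤ n) (p lam : ℝ) (hp : 1 ≤ p)
    (hlam : (n : ℝ) / ((n : ℝ) + p) < lam) (hlam1 : lam < 1)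
    (g : EuclideanSpace ℝ (Fin n) → ℝ)
    (hg_nonneg : ∀ x, 0 ≤ g x) (hg_int : Integrable g volume)
    (hg_one : ∫ x, g x = 1)
    (hmom : Integrable (fun x : EuclideanSpace ℝ (Fin n) => ‖x‖ ^ p * g x) volume)
    (a b : EuclideanSpace ℝ (Fin n) → ℝ)
    (ha_pos : ∀ u, ‖u‖ = 1 → 0 < a u) (hb_pos : ∀ u, ‖u‖ = 1 → 0 < b u)
    (hform : ∀ u : EuclideanSpace ℝ (Fin n), ‖u‖ = 1 →
      ∀ᵐ x : EuclideanSpace ℝ (Fin n) ∂volume,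
        g (‖x‖ • u) = a u * (1 + (b u * ‖x‖) ^ p) ^ (-(1 / (1 - lam))))
    (γ : ℝ) (hγ : 0 < γ)
    (hratio : ∀ u : EuclideanSpace ℝ (Fin n), ‖u‖ = 1 →
      (∫ x : EuclideanSpace ℝ (Fin n), g (‖x‖ • u) ^ lam)
        = γ * ∫ x : EuclideanSpace ℝ (Fin n), g (‖x‖ • u)) :
    ∀ u : EuclideanSpace ℝ (Fin n), ‖u‖ = 1 →
      a u = ((lam * p - (n : ℝ) * (1 - lam)) * γ / (lam * p)) ^ (1 / (lam - 1)) :=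
  radial_equality_constant_general n hn p lam hp hlam hlam1 g a b ha_pos hb_pos hform γ hratio
end
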